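/- Let M : ℍ → 𝕆 be a deterministic program without low-security inputs and let n = |ℍ|. Then GE[U](M) = n/2 − (1/(2n))·Σ_o |ℍ_o|², where the sum is over the outputs o of M and ℍ_o = {h ∈ ℍ | M(h) = o}. -/

import Mathlib

/-!
Statement 10: For a deterministic program `M : ℍ → 𝕆` without low-security
inputs and `n = |ℍ|`: `GE[U](M) = n/2 − (1/(2n)) · Σ_o |ℍ_o|²`, where
`ℍ_o = {h ∈ ℍ | M(h) = o}`.
-/

/-- Guessing entropy of a (sub)distribution `p` on a finite type `X`:
`𝓖(p) = Σ_{1≤i≤m} i · p(x_i)` with `x_1, …, x_m` sorted so that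
`p(x_i) ≥ p(x_j)` whenever `i ≤ j`. -/
noncomputable def guess {X : Type*} [Fintype X] (p : X → ℝ) : ℝ :=
  ∑ i : Fin (Fintype.card X), ((i : ℕ) + 1 : ℝ) *
    p ((Fintype.equivFin X).symm
      (Tuple.sort (fun j => -p ((Fintype.equivFin X).symm j)) i))

/-- The uniform distribution on a finite type. -/
noncomputable def unif (X : Type*) [Fintype X] : X → ℝ :=
  fun _ => (Fintype.card X : ℝ)⁻¹

variable {Hi Oi : Type*}

/-- Probability `μ(O = o)` where `O = M(H)` (no low-security inputs). -/
noncomputable def pO [Fintype Hi] [DecidableEq Oi] (M : Hi → Oi) (μ : Hi → ℝ) (o : Oi) :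
    ℝ := ∑ h, if M h = o then μ h else 0

/-- Conditional guessing entropy `𝓖[μ](H|O)` where `O = M(H)`. -/
noncomputable def condGuessHO [Fintype Hi] [Fintype Oi] [DecidableEq Oi]
    (M : Hi → Oi) (μ : Hi → ℝ) : ℝ :=
  ∑ o : Oi, pO M μ o * guess (fun h : Hi => (if M h = o then μ h else 0) / pO M μ o)

/-- Guessing-entropy-based QIF for programs without low-security inputs:
`GE[μ](M) = 𝓖[μ](H) − 𝓖[μ](H|O)`. -/
noncomputable def GE0 [Fintype Hi] [Fintype Oi] [DecidableEq Oi]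
    (M : Hi → Oi) (μ : Hi → ℝ) : ℝ :=
  guess μ - condGuessHO M μ

/-!
Under the uniform prior the conditional distribution of `H` given `O = o` is uniform on the
fibre `ℍ_o`, and a distribution that is uniform on `k` points has guessing entropy
`(k + 1) / 2`, because every enumeration of its support is non-increasing. Hence
`𝓖(H) = (n + 1) / 2` and `𝓖(H | O) = Σ_o (|ℍ_o| / n) (|ℍ_o| + 1) / 2 = (Σ_o |ℍ_o|² + n) / (2n)`.
-/

open Finset

lemma sum_range_natCast_add_one (k : ℕ) :
    ∑ i ∈ range k, ((i : ℝ) + 1) = k * (k + 1) / 2 := by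
  induction k with
  | zero => simp
  | succ k ih =>
    rw [sum_range_succ, ih]
    push_cast
    ring

lemma exists_equivFin_iff_lt {X : Type*} [Fintype X] (P : X → Prop) [DecidablePred P] :
    ∃ e : X ≃ Fin (Fintype.card X), ∀ x, P x ↔ (e x : ℕ) < #{x | P x} := by
  have hcard : #{x | P x} + Fintype.card {x // ¬P x} = Fintype.card X := by
    rw [← Fintype.card_subtype, ← Fintype.card_sum, Fintype.card_congr (Equiv.sumCompl P)]
  refine ⟨(Equiv.sumCompl P).symm.trans
    (((Fintype.equivFinOfCardEq (Fintype.card_subtype P)).sumCongr (Fintype.equivFin _)).trans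
      (finSumFinEquiv.trans (finCongr hcard))), fun x => ?_⟩
  by_cases hx : P x
  · simp [hx, Equiv.sumCompl_symm_apply_of_pos]
  · simp [hx, Equiv.sumCompl_symm_apply_of_neg]

lemma guess_eq_of_antitone {X : Type*} [Fintype X] (p : X → ℝ) (e : X ≃ Fin (Fintype.card X))
    (hp : Antitone (p ∘ e.symm)) :
    guess p = ∑ i : Fin (Fintype.card X), ((i : ℕ) + 1 : ℝ) * p (e.symm i) := by
  set f := fun j => -p ((Fintype.equivFin X).symm j)
  have hsort : f ∘ (e.symm.trans (Fintype.equivFin X)) = f ∘ Tuple.sort f :=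
    Tuple.comp_sort_eq_comp_iff_monotone.mpr fun i j hij => by simpa [f] using hp hij
  refine Finset.sum_congr rfl fun i _ => congrArg _ ?_
  simpa [f] using congrFun hsort.symm i

lemma guess_ite {X : Type*} [Fintype X] (P : X → Prop) [DecidablePred P] {a : ℝ}
    (ha : 0 ≤ a) :
    guess (fun x => if P x then a else 0) = a * (#{x | P x} * (#{x | P x} + 1) / 2) := by
  obtain ⟨e, he⟩ := exists_equivFin_iff_lt P
  set k := #{x | P x}
  have hstep : ∀ i, (if P (e.symm i) then a else 0) = if (i : ℕ) < k then a else 0 := by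
    simp [he]
  have hanti : Antitone fun i : Fin (Fintype.card X) => if (i : ℕ) < k then a else 0 := by
    intro i j hij
    dsimp only
    split_ifs <;> first | exact le_rfl | exact ha | omega
  rw [guess_eq_of_antitone _ e (by simpa [Function.comp_def, hstep] using hanti)]
  simp_rw [hstep, mul_ite, mul_zero]
  rw [Fin.sum_univ_eq_sum_range (fun i => if i < k then ((i : ℝ) + 1) * a else 0), ← sum_filter]
  have hrange : (range (Fintype.card X)).filter (· < k) = range k := by
    ext i
    simpa using fun hi => hi.trans_le (card_le_univ _)
  rw [hrange, ← sum_mul, sum_range_natCast_add_one, mul_comm]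

lemma guess_unif (X : Type*) [Fintype X] [Nonempty X] :
    guess (unif X) = (Fintype.card X + 1) / 2 := by
  have hunif : unif X = fun _ => if True then (Fintype.card X : ℝ)⁻¹ else 0 := by
    simp only [if_true]
    rfl
  rw [hunif, guess_ite _ (by positivity), filter_true, card_univ]
  field_simp

section Uniform

variable [Fintype Hi] [DecidableEq Oi] (M : Hi → Oi)

lemma pO_unif (o : Oi) :
    pO M (unif Hi) o = #{h | M h = o} / Fintype.card Hi := by
  simp [pO, unif, ← sum_filter, div_eq_mul_inv]

lemma pO_unif_mul_guess_cond (o : Oi) :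
    pO M (unif Hi) o * guess (fun h => (if M h = o then unif Hi h else 0) / pO M (unif Hi) o) =
      (#{h | M h = o} : ℝ) * (#{h | M h = o} + 1) / (2 * Fintype.card Hi) := by
  have hcond : (fun h => (if M h = o then unif Hi h else 0) / pO M (unif Hi) o) =
      fun h => if M h = o then (#{h | M h = o} : ℝ)⁻¹ else 0 := by
    funext h
    split_ifs with hh
    · have : Nonempty Hi := ⟨h⟩
      have hk : (#{h | M h = o} : ℝ) ≠ 0 := by simpa using ⟨h, hh⟩
      simp only [pO_unif, unif]
      field_simp
    · simp
  rw [hcond, guess_ite _ (by positivity), pO_unif]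
  rcases eq_or_ne (#{h | M h = o} : ℝ) 0 with hk | hk
  · simp [hk]
  · field_simp

lemma condGuessHO_unif [Fintype Oi] [Nonempty Hi] :
    condGuessHO M (unif Hi) =
      (∑ o : Oi, (#{h | M h = o} : ℝ) ^ 2) / (2 * Fintype.card Hi) + 1 / 2 := by
  have hfibers : ∑ o : Oi, (#{h | M h = o} : ℝ) = Fintype.card Hi := by
    exact_mod_cast (card_eq_sum_card_fiberwise (f := M) (t := univ) fun _ _ => mem_univ _).symm
  have hn : (Fintype.card Hi : ℝ) ≠ 0 := by positivity
  simp_rw [condGuessHO, pO_unif_mul_guess_cond, ← sum_div, mul_add, mul_one, sum_add_distrib,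
    hfibers, add_div, ← sq]
  field_simp

end Uniform

theorem GE0_unif_eq
    [Fintype Hi] [Fintype Oi] [DecidableEq Oi] [Nonempty Hi] (M : Hi → Oi) :
    GE0 M (unif Hi) =
      (Fintype.card Hi : ℝ) / 2 -
        (1 / (2 * (Fintype.card Hi : ℝ))) *
          ∑ o : Oi, ((Finset.univ.filter fun h : Hi => M h = o).card : ℝ) ^ 2 := by
  rw [GE0, guess_unif, condGuessHO_unif]
  ring
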